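/- (Descent Lemma for Byz-EF21.) Let x^t, g_i^t (i ∈ 𝒢) and g^t be random vectors with x^{t+1} = x^t − γ g^t, γ > 0, cδ > 0, and suppose g^t satisfies the robust-aggregation bound E‖g^t − ḡ^t‖² ≤ cδ·(1/(G(G−1))) Σ_{i,l∈𝒢, i≠l} E‖g_i^t − g_l^t‖², where ḡ^t = (1/G) Σ_{i∈𝒢} g_i^t. Then with κ = 1 − 8Bcδ(1 + 1/√(8cδ)): E[f(x^{t+1})] ≤ E[f(x^t)] − (γκ/2)·E‖∇f(x^t)‖² − (1/(2γ) − L/2)·E‖x^{t+1} − x^t‖² + (γ/2)(1 + √(8cδ))²·E[(1/G) Σ_{i∈𝒢} ‖g_i^t − ∇f_i(x^t)‖²] + 4γcδ(1 + 1/√(8cδ))ζ². -/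

import Mathlib

/-!
Smoothness gives `f y ≤ f x + ⟪∇f x, y - x⟫ + L/2 ‖y - x‖²`, which for the step `y = x - γ g`
reads `f y ≤ f x - γ/2 ‖∇f x‖² - (1/(2γ) - L/2) ‖y - x‖² + γ/2 ‖g - ∇f x‖²`. The error
`g - ∇f x` is split through the average `ḡ` of the honest vectors by Young's inequality with weight
`s = √(8cδ)`: Jensen bounds `‖ḡ - ∇f x‖²` by the mean local error, and the robust-aggregation
bound controls `‖g - ḡ‖²` by the mean pairwise distance, which is at most `8` times the mean local
error plus the heterogeneity `B ‖∇f‖² + ζ²`. The weight is chosen so that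
`(1 + 1/s) 8cδ + (1 + s) = (1 + s)²`.
-/

open MeasureTheory Finset
open scoped RealInnerProductSpace

lemma add_sq_le_weighted {x y s : ℝ} (hs : 0 < s) :
    (x + y) ^ 2 ≤ (1 + s) * x ^ 2 + (1 + 1 / s) * y ^ 2 := by
  have hcross : 2 * x * y ≤ s * x ^ 2 + 1 / s * y ^ 2 := by
    rw [← sub_nonneg, show s * x ^ 2 + 1 / s * y ^ 2 - 2 * x * y = (s * x - y) ^ 2 / s by
      field_simp; ring]
    positivity
  linarith

section SeminormedAddCommGroup
variable {E : Type*} [SeminormedAddCommGroup E]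

lemma norm_add_sq_le_weighted (a b : E) {s : ℝ} (hs : 0 < s) :
    ‖a + b‖ ^ 2 ≤ (1 + s) * ‖a‖ ^ 2 + (1 + 1 / s) * ‖b‖ ^ 2 :=
  (pow_le_pow_left₀ (norm_nonneg _) (norm_add_le a b) 2).trans (add_sq_le_weighted hs)

lemma norm_sub_sq_le_two_mul (a b : E) : ‖a - b‖ ^ 2 ≤ 2 * ‖a‖ ^ 2 + 2 * ‖b‖ ^ 2 := by
  have := norm_add_sq_le_weighted a (-b) one_pos
  rw [← sub_eq_add_neg, norm_neg] at this
  linarith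

variable {ι : Type*} [Fintype ι] [DecidableEq ι]

lemma sum_offDiag_fst (u : ι → ℝ) :
    ∑ q ∈ univ.offDiag, u q.1 = ((Fintype.card ι : ℝ) - 1) * ∑ i, u i := by
  have h := sum_union (disjoint_diag_offDiag (s := univ)) (f := fun q => u q.1)
  rw [diag_union_offDiag, sum_product] at h
  simp only [diag, sum_map, Function.Embedding.coeFn_mk, Function.diag, sum_const, card_univ,
    nsmul_eq_mul, ← mul_sum] at h
  linarith

lemma sum_offDiag_snd (u : ι → ℝ) :
    ∑ q ∈ univ.offDiag, u q.2 = ((Fintype.card ι : ℝ) - 1) * ∑ i, u i := by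
  have h := sum_union (disjoint_diag_offDiag (s := univ)) (f := fun q => u q.2)
  rw [diag_union_offDiag, sum_product_right] at h
  simp only [diag, sum_map, Function.Embedding.coeFn_mk, Function.diag, sum_const, card_univ,
    nsmul_eq_mul, ← mul_sum] at h
  linarith

lemma sum_offDiag_norm_sub_sq_le (a : ι → E) (m : E) :
    ∑ q ∈ univ.offDiag, ‖a q.1 - a q.2‖ ^ 2
      ≤ 4 * ((Fintype.card ι : ℝ) - 1) * ∑ i, ‖a i - m‖ ^ 2 :=
  calc ∑ q ∈ univ.offDiag, ‖a q.1 - a q.2‖ ^ 2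
      ≤ ∑ q ∈ univ.offDiag, (2 * ‖a q.1 - m‖ ^ 2 + 2 * ‖a q.2 - m‖ ^ 2) := by
        gcongr with q
        simpa using norm_sub_sq_le_two_mul (a q.1 - m) (a q.2 - m)
    _ = 4 * ((Fintype.card ι : ℝ) - 1) * ∑ i, ‖a i - m‖ ^ 2 := by
        rw [sum_add_distrib, ← mul_sum, ← mul_sum, sum_offDiag_fst (fun i => ‖a i - m‖ ^ 2),
          sum_offDiag_snd (fun i => ‖a i - m‖ ^ 2)]
        ring

lemma inv_mul_sum_offDiag_norm_sub_sq_le (hι : 2 ≤ Fintype.card ι) (g h : ι → E) (m : E) :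
    1 / ((Fintype.card ι : ℝ) * ((Fintype.card ι : ℝ) - 1)) *
        ∑ q ∈ univ.offDiag, ‖g q.1 - g q.2‖ ^ 2
      ≤ 8 * (1 / (Fintype.card ι : ℝ) * ∑ i, ‖g i - h i‖ ^ 2
        + 1 / (Fintype.card ι : ℝ) * ∑ i, ‖h i - m‖ ^ 2) := by
  have hι' : (1 : ℝ) < Fintype.card ι := by exact_mod_cast hι
  have hpos : 0 < (Fintype.card ι : ℝ) - 1 := by linarith
  calc _ ≤ 1 / ((Fintype.card ι : ℝ) * ((Fintype.card ι : ℝ) - 1)) *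
        (4 * ((Fintype.card ι : ℝ) - 1) * ∑ i, ‖g i - m‖ ^ 2) := by
        gcongr
        exact sum_offDiag_norm_sub_sq_le g m
    _ ≤ 1 / ((Fintype.card ι : ℝ) * ((Fintype.card ι : ℝ) - 1)) *
        (4 * ((Fintype.card ι : ℝ) - 1) * ∑ i, (2 * ‖g i - h i‖ ^ 2 + 2 * ‖h i - m‖ ^ 2)) := by
        gcongr with i
        have := norm_sub_sq_le_two_mul (g i - h i) (m - h i)
        rwa [sub_sub_sub_cancel_right, norm_sub_rev m] at this
    _ = _ := by
        rw [sum_add_distrib, ← mul_sum, ← mul_sum]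
        field_simp
        ring

end SeminormedAddCommGroup

section NormedSpace
variable {E : Type*} [SeminormedAddCommGroup E] [NormedSpace ℝ E] {ι : Type*} [Fintype ι]

lemma norm_inv_card_smul_sum_sq_le (v : ι → E) :
    ‖(Fintype.card ι : ℝ)⁻¹ • ∑ i, v i‖ ^ 2 ≤ 1 / (Fintype.card ι : ℝ) * ∑ i, ‖v i‖ ^ 2 := by
  have hnorm : ‖(Fintype.card ι : ℝ)⁻¹ • ∑ i, v i‖ ≤ (∑ i, ‖v i‖) / Fintype.card ι := by
    rw [norm_smul, norm_inv, Real.norm_natCast, inv_mul_eq_div]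
    gcongr
    exact norm_sum_le _ _
  calc _ ≤ ((∑ i, ‖v i‖) / Fintype.card ι) ^ 2 := by gcongr
    _ ≤ (∑ i, ‖v i‖ ^ 2) / Fintype.card ι := by
        simpa using sum_div_card_sq_le_sum_sq_div_card (s := univ) (f := fun i => ‖v i‖)
    _ = _ := by ring

lemma norm_sub_inv_card_smul_sum_sq_le (a : E) (g h : ι → E) {s : ℝ} (hs : 0 < s) :
    ‖a - (Fintype.card ι : ℝ)⁻¹ • ∑ i, h i‖ ^ 2
      ≤ (1 + 1 / s) * ‖a - (Fintype.card ι : ℝ)⁻¹ • ∑ i, g i‖ ^ 2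
        + (1 + s) * (1 / (Fintype.card ι : ℝ) * ∑ i, ‖g i - h i‖ ^ 2) := by
  have hsplit : a - (Fintype.card ι : ℝ)⁻¹ • ∑ i, h i
      = (Fintype.card ι : ℝ)⁻¹ • ∑ i, (g i - h i) + (a - (Fintype.card ι : ℝ)⁻¹ • ∑ i, g i) := by
    rw [sum_sub_distrib, smul_sub]; abel
  rw [hsplit]
  grw [norm_add_sq_le_weighted _ _ hs, norm_inv_card_smul_sum_sq_le]
  linarith

end NormedSpace

section Gradient
variable {F : Type*} [NormedAddCommGroup F] [InnerProductSpace ℝ F] [CompleteSpace F]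

lemma gradient_const_mul_sum {ι : Type*} [Fintype ι] {fS : ι → F → ℝ}
    (hdiff : ∀ i, Differentiable ℝ (fS i)) (c : ℝ) (x : F) :
    gradient (fun y => c * ∑ i, fS i y) x = c • ∑ i, gradient (fS i) x := by
  refine (hasGradientAt_iff_hasFDerivAt.2 ?_).gradient
  rw [map_smul, map_sum]
  exact (HasFDerivAt.fun_sum fun i _ => (hdiff i x).hasGradientAt.hasFDerivAt).const_mul c

lemma Differentiable.le_add_inner_gradient_add_sq {f : F → ℝ} (hf : Differentiable ℝ f) {L : ℝ}
    (hsmooth : ∀ x y, ‖gradient f x - gradient f y‖ ≤ L * ‖x - y‖) (x y : F) :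
    f y ≤ f x + ⟪gradient f x, y - x⟫ + L / 2 * ‖y - x‖ ^ 2 := by
  set v := y - x
  let φ : ℝ → ℝ := fun t => f (x + t • v) - t * ⟪gradient f x, v⟫ - L / 2 * t ^ 2 * ‖v‖ ^ 2
  have hφ : ∀ t, HasDerivAt φ
      (⟪gradient f (x + t • v), v⟫ - ⟪gradient f x, v⟫ - L * t * ‖v‖ ^ 2) t := by
    intro t
    have hline : HasDerivAt (fun t : ℝ => x + t • v) v t := by
      simpa using ((hasDerivAt_id t).smul_const v).const_add x
    have hsq := ((hasDerivAt_pow 2 t).const_mul (L / 2)).mul_const (‖v‖ ^ 2)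
    have hcomp : HasDerivAt (fun t : ℝ => f (x + t • v)) ⟪gradient f (x + t • v), v⟫ t :=
      (hf _).hasGradientAt.hasFDerivAt.comp_hasDerivAt t hline
    exact ((hcomp.sub ((hasDerivAt_id t).mul_const ⟪gradient f x, v⟫)).sub hsq).congr_deriv
      (by push_cast; ring)
  -- The claim is `φ 1 ≤ φ 0`; `φ' t = ⟪∇f (x + t • v) - ∇f x, v⟫ - L t ‖v‖² ≤ 0` for `t ≥ 0`.
  have hanti : AntitoneOn φ (Set.Ici 0) := by
    refine antitoneOn_of_hasDerivWithinAt_nonpos (convex_Ici 0)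
      (fun t _ => (hφ t).continuousAt.continuousWithinAt) (fun t _ => (hφ t).hasDerivWithinAt) ?_
    intro t ht
    rw [interior_Ici, Set.mem_Ioi] at ht
    have hcs : ⟪gradient f (x + t • v) - gradient f x, v⟫ ≤ L * t * ‖v‖ ^ 2 :=
      calc ⟪gradient f (x + t • v) - gradient f x, v⟫
          ≤ ‖gradient f (x + t • v) - gradient f x‖ * ‖v‖ := real_inner_le_norm _ _
        _ ≤ L * ‖x + t • v - x‖ * ‖v‖ := by gcongr; exact hsmooth _ _
        _ = L * t * ‖v‖ ^ 2 := by
          rw [add_sub_cancel_left, norm_smul, Real.norm_of_nonneg ht.le]; ring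
    rw [inner_sub_left] at hcs
    linarith
  have hφ0 : φ 0 = f x := by simp [φ]
  have hφ1 : φ 1 = f y - ⟪gradient f x, v⟫ - L / 2 * ‖v‖ ^ 2 := by simp [φ, v]
  linarith [hanti (Set.mem_Ici.2 le_rfl) (Set.mem_Ici.2 zero_le_one) zero_le_one]

lemma Differentiable.le_of_gradient_step {f : F → ℝ} (hf : Differentiable ℝ f) {L : ℝ}
    (hsmooth : ∀ x y, ‖gradient f x - gradient f y‖ ≤ L * ‖x - y‖) {γ : ℝ} {x y g : F}
    (hy : y = x - γ • g) :
    f y ≤ f x - γ / 2 * ‖gradient f x‖ ^ 2 - (1 / (2 * γ) - L / 2) * ‖y - x‖ ^ 2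
      + γ / 2 * ‖g - gradient f x‖ ^ 2 := by
  have hstep : y - x = -(γ • g) := by rw [hy]; abel
  have hinner : ⟪gradient f x, y - x⟫
      = -(γ / 2) * ‖gradient f x‖ ^ 2 - γ / 2 * ‖g‖ ^ 2 + γ / 2 * ‖g - gradient f x‖ ^ 2 := by
    rw [hstep, inner_neg_right, real_inner_smul_right, norm_sub_sq_real, real_inner_comm]
    ring
  have hnorm : 1 / (2 * γ) * ‖y - x‖ ^ 2 = γ / 2 * ‖g‖ ^ 2 := by
    rw [hstep, norm_neg, norm_smul, Real.norm_eq_abs, mul_pow, sq_abs]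
    rcases eq_or_ne γ 0 with rfl | hγ
    · simp
    · field_simp
  linarith [hf.le_add_inner_gradient_add_sq hsmooth x y]

variable {ι : Type*} [Fintype ι]

lemma sub_le_of_gradient_step_of_eq_average {fS : ι → F → ℝ}
    (hdiff : ∀ i, Differentiable ℝ (fS i)) {f : F → ℝ}
    (hf : ∀ x, f x = 1 / (Fintype.card ι : ℝ) * ∑ i, fS i x) {L : ℝ}
    (hsmooth : ∀ x y, ‖gradient f x - gradient f y‖ ≤ L * ‖x - y‖) {γ s : ℝ} (hγ : 0 ≤ γ)
    (hs : 0 < s) (g : ι → F) {x y a : F} (hy : y = x - γ • a) :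
    f y - f x ≤ -(γ / 2 * ‖gradient f x‖ ^ 2) - (1 / (2 * γ) - L / 2) * ‖y - x‖ ^ 2
      + γ / 2 * ((1 + 1 / s) * ‖a - (Fintype.card ι : ℝ)⁻¹ • ∑ i, g i‖ ^ 2
        + (1 + s) * (1 / (Fintype.card ι : ℝ) * ∑ i, ‖g i - gradient (fS i) x‖ ^ 2)) := by
  have hfS : f = fun x => 1 / (Fintype.card ι : ℝ) * ∑ i, fS i x := funext hf
  have hfd : Differentiable ℝ f := hfS ▸ (Differentiable.fun_sum fun i _ => hdiff i).const_mul _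
  have hgrad : gradient f x = (Fintype.card ι : ℝ)⁻¹ • ∑ i, gradient (fS i) x := by
    rw [hfS, gradient_const_mul_sum hdiff, one_div]
  have herr := norm_sub_inv_card_smul_sum_sq_le a g (fun i => gradient (fS i) x) hs
  rw [← hgrad] at herr
  linarith [hfd.le_of_gradient_step hsmooth hy,
    mul_le_mul_of_nonneg_left herr (by positivity : 0 ≤ γ / 2)]

end Gradient

theorem descent_lemma_byz_ef21_general
    {d : ℕ} {ι : Type*} [Fintype ι] [DecidableEq ι]
    (hG : 2 ≤ Fintype.card ι)
    -- local loss functions and their average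
    (fS : ι → EuclideanSpace ℝ (Fin d) → ℝ)
    (f : EuclideanSpace ℝ (Fin d) → ℝ)
    (hf : ∀ x, f x = (1 / (Fintype.card ι : ℝ)) * ∑ i, fS i x)
    (hdiff : ∀ i, Differentiable ℝ (fS i))
    -- L-smoothness of f
    (L : ℝ)
    (hsmooth : ∀ x y, ‖gradient f x - gradient f y‖ ≤ L * ‖x - y‖)
    -- (B, ζ²)-heterogeneity
    (B ζ : ℝ)
    (hhet : ∀ x, (1 / (Fintype.card ι : ℝ)) *
        ∑ i, ‖gradient (fS i) x - gradient f x‖ ^ 2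
      ≤ B * ‖gradient f x‖ ^ 2 + ζ ^ 2)
    -- constants (with cδ > 0)
    (c δ γ : ℝ) (hγ : 0 < γ)
    (hcδ : 0 < c * δ)
    -- underlying probability space and random vectors
    {Ω : Type*} [MeasurableSpace Ω] (μ : Measure Ω) [IsProbabilityMeasure μ]
    (xt : Ω → EuclideanSpace ℝ (Fin d))
    (g : ι → Ω → EuclideanSpace ℝ (Fin d))
    (gt : Ω → EuclideanSpace ℝ (Fin d))
    (xt1 : Ω → EuclideanSpace ℝ (Fin d))
    (hstep : ∀ ω, xt1 ω = xt ω - γ • gt ω)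
    -- robust aggregation bound
    (hagg : ∫ ω, ‖gt ω - (Fintype.card ι : ℝ)⁻¹ • ∑ i, g i ω‖ ^ 2 ∂μ
      ≤ c * δ * ((1 / ((Fintype.card ι : ℝ) * ((Fintype.card ι : ℝ) - 1))) *
          ∑ q ∈ Finset.univ.offDiag, ∫ ω, ‖g q.1 ω - g q.2 ω‖ ^ 2 ∂μ))
    -- integrability of all relevant quantities
    (hint1 : Integrable (fun ω => f (xt1 ω)) μ)
    (hint2 : Integrable (fun ω => f (xt ω)) μ)
    (hint3 : Integrable (fun ω => ‖gradient f (xt ω)‖ ^ 2) μ)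
    (hint4 : Integrable (fun ω => ‖xt1 ω - xt ω‖ ^ 2) μ)
    (hint5 : ∀ i, Integrable (fun ω => ‖g i ω - gradient (fS i) (xt ω)‖ ^ 2) μ)
    (hint7 : ∀ i l : ι, Integrable (fun ω => ‖g i ω - g l ω‖ ^ 2) μ)
    (hint8 : Integrable
      (fun ω => ‖gt ω - (Fintype.card ι : ℝ)⁻¹ • ∑ i, g i ω‖ ^ 2) μ) :
    ∫ ω, f (xt1 ω) ∂μ
      ≤ ∫ ω, f (xt ω) ∂μ
        - (γ * (1 - 8 * B * c * δ * (1 + 1 / Real.sqrt (8 * c * δ))) / 2) *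
            ∫ ω, ‖gradient f (xt ω)‖ ^ 2 ∂μ
        - (1 / (2 * γ) - L / 2) * ∫ ω, ‖xt1 ω - xt ω‖ ^ 2 ∂μ
        + (γ / 2) * (1 + Real.sqrt (8 * c * δ)) ^ 2 *
            ∫ ω, (1 / (Fintype.card ι : ℝ)) *
              ∑ i, ‖g i ω - gradient (fS i) (xt ω)‖ ^ 2 ∂μ
        + 4 * γ * c * δ * (1 + 1 / Real.sqrt (8 * c * δ)) * ζ ^ 2 := by
  set s := Real.sqrt (8 * c * δ)
  have hs : 0 < s := Real.sqrt_pos.2 (by linarith)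
  have hpt (ω) :=
    sub_le_of_gradient_step_of_eq_average hdiff hf hsmooth hγ.le hs (g · ω) (hstep ω)
  have hdisp (ω) : 1 / ((Fintype.card ι : ℝ) * ((Fintype.card ι : ℝ) - 1)) *
        ∑ q ∈ univ.offDiag, ‖g q.1 ω - g q.2 ω‖ ^ 2
      ≤ 8 * (1 / (Fintype.card ι : ℝ) * ∑ i, ‖g i ω - gradient (fS i) (xt ω)‖ ^ 2
        + (B * ‖gradient f (xt ω)‖ ^ 2 + ζ ^ 2)) :=
    (inv_mul_sum_offDiag_norm_sub_sq_le hG (g · ω) (fun i => gradient (fS i) (xt ω))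
      (gradient f (xt ω))).trans (by gcongr; exact hhet (xt ω))
  have hdesc := integral_mono (hint1.sub hint2) (by fun_prop) hpt
  have hpair := integral_mono
    ((integrable_finsetSum _ fun q _ => hint7 q.1 q.2).const_mul _) (by fun_prop) hdisp
  simp (disch := fun_prop) only [Pi.sub_apply, integral_sub hint1 hint2, integral_add,
    integral_sub, integral_neg, integral_const_mul, integral_finsetSum, integral_const, probReal_univ,
    one_smul] at hdesc hpair ⊢
  have hA := hagg.trans (mul_le_mul_of_nonneg_left hpair hcδ.le)
  have hkey : (1 + 1 / s) * (8 * c * δ) + (1 + s) = (1 + s) ^ 2 := by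
    rw [← Real.sq_sqrt (by linarith : 0 ≤ 8 * c * δ)]
    field_simp
    ring
  linear_combination hdesc + (γ / 2 * (1 + 1 / s)) * hA
    + γ / 2 * (1 / (Fintype.card ι : ℝ) * ∑ i, ∫ ω, ‖g i ω - gradient (fS i) (xt ω)‖ ^ 2 ∂μ)
      * hkey

/-- Descent Lemma for Byz-EF21. -/
theorem descent_lemma_byz_ef21
    {d : ℕ} {ι : Type*} [Fintype ι] [DecidableEq ι]
    (hG : 2 ≤ Fintype.card ι)
    -- local loss functions and their average
    (fS : ι → EuclideanSpace ℝ (Fin d) → ℝ)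
    (f : EuclideanSpace ℝ (Fin d) → ℝ)
    (hf : ∀ x, f x = (1 / (Fintype.card ι : ℝ)) * ∑ i, fS i x)
    (hdiff : ∀ i, Differentiable ℝ (fS i))
    -- L-smoothness of f
    (L : ℝ) (hL : 0 ≤ L)
    (hsmooth : ∀ x y, ‖gradient f x - gradient f y‖ ≤ L * ‖x - y‖)
    -- (B, ζ²)-heterogeneity
    (B ζ : ℝ) (hB : 0 ≤ B) (hζ : 0 ≤ ζ)
    (hhet : ∀ x, (1 / (Fintype.card ι : ℝ)) *
        ∑ i, ‖gradient (fS i) x - gradient f x‖ ^ 2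
      ≤ B * ‖gradient f x‖ ^ 2 + ζ ^ 2)
    -- constants (with cδ > 0)
    (c δ γ : ℝ) (hc : 0 < c) (hδ0 : 0 < δ) (hδ : δ < 1 / 2) (hγ : 0 < γ)
    (hcδ : 0 < c * δ)
    -- underlying probability space and random vectors
    {Ω : Type*} [MeasurableSpace Ω] (μ : Measure Ω) [IsProbabilityMeasure μ]
    (xt : Ω → EuclideanSpace ℝ (Fin d))
    (g : ι → Ω → EuclideanSpace ℝ (Fin d))
    (gt : Ω → EuclideanSpace ℝ (Fin d))
    (xt1 : Ω → EuclideanSpace ℝ (Fin d))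
    (hstep : ∀ ω, xt1 ω = xt ω - γ • gt ω)
    -- robust aggregation bound
    (hagg : ∫ ω, ‖gt ω - (Fintype.card ι : ℝ)⁻¹ • ∑ i, g i ω‖ ^ 2 ∂μ
      ≤ c * δ * ((1 / ((Fintype.card ι : ℝ) * ((Fintype.card ι : ℝ) - 1))) *
          ∑ q ∈ Finset.univ.offDiag, ∫ ω, ‖g q.1 ω - g q.2 ω‖ ^ 2 ∂μ))
    -- integrability of all relevant quantities
    (hint1 : Integrable (fun ω => f (xt1 ω)) μ)
    (hint2 : Integrable (fun ω => f (xt ω)) μ)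
    (hint3 : Integrable (fun ω => ‖gradient f (xt ω)‖ ^ 2) μ)
    (hint4 : Integrable (fun ω => ‖xt1 ω - xt ω‖ ^ 2) μ)
    (hint5 : ∀ i, Integrable (fun ω => ‖g i ω - gradient (fS i) (xt ω)‖ ^ 2) μ)
    (hint6 : Integrable
      (fun ω => ‖(Fintype.card ι : ℝ)⁻¹ • ∑ i, g i ω - gradient f (xt ω)‖ ^ 2) μ)
    (hint7 : ∀ i l : ι, Integrable (fun ω => ‖g i ω - g l ω‖ ^ 2) μ)
    (hint8 : Integrable
      (fun ω => ‖gt ω - (Fintype.card ι : ℝ)⁻¹ • ∑ i, g i ω‖ ^ 2) μ) :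
    ∫ ω, f (xt1 ω) ∂μ
      ≤ ∫ ω, f (xt ω) ∂μ
        - (γ * (1 - 8 * B * c * δ * (1 + 1 / Real.sqrt (8 * c * δ))) / 2) *
            ∫ ω, ‖gradient f (xt ω)‖ ^ 2 ∂μ
        - (1 / (2 * γ) - L / 2) * ∫ ω, ‖xt1 ω - xt ω‖ ^ 2 ∂μ
        + (γ / 2) * (1 + Real.sqrt (8 * c * δ)) ^ 2 *
            ∫ ω, (1 / (Fintype.card ι : ℝ)) *
              ∑ i, ‖g i ω - gradient (fS i) (xt ω)‖ ^ 2 ∂μ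
        + 4 * γ * c * δ * (1 + 1 / Real.sqrt (8 * c * δ)) * ζ ^ 2 :=
  descent_lemma_byz_ef21_general hG fS f hf hdiff L hsmooth B ζ hhet c δ γ hγ hcδ μ xt g gt xt1
    hstep hagg hint1 hint2 hint3 hint4 hint5 hint7 hint8
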